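/- arXiv:2201.11715 — 5 statements merged into one kernel-verified Lean document; each statement's English description precedes it below -/
import Mathlib

section
/- Let k be a field of characteristic 3 and A an associative unital k-algebra containing elements a, b, c satisfying a^3 = cbc = bc - cb, b^3 = cac = ac - ca, and ab - ba = c. Then c^3 = 0. -/
/-- Let `k` be a field of characteristic 3 and `A` an associative unital `k`-algebra
containing elements `a, b, c` satisfying `a³ = cbc = bc - cb`, `b³ = cac = ac - ca`,
and `ab - ba = c`. Then `c³ = 0`. -/
theorem stmt0 (k : Type*) [Field k] [CharP k 3]
    (A : Type*) [Ring A] [Algebra k A] (a b c : A)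
    (h1 : a ^ 3 = c * b * c) (h1' : c * b * c = b * c - c * b)
    (h2 : b ^ 3 = c * a * c) (h2' : c * a * c = a * c - c * a)
    (h3 : a * b - b * a = c) :
    c ^ 3 = 0 := by
  have h3A : (3 : A) = 0 := by
    have hk : (3 : k) = 0 := by exact_mod_cast CharP.cast_eq_zero k 3
    calc (3 : A) = algebraMap k A 3 := (map_ofNat _ 3).symm
    _ = algebraMap k A 0 := by rw [hk]
    _ = 0 := map_zero _
  have e0 : a ^ 3 - c * b * c = 0 := sub_eq_zero_of_eq h1
  have e1 : c * b * c - (b * c - c * b) = 0 := sub_eq_zero_of_eq h1'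
  have e2 : b ^ 3 - c * a * c = 0 := sub_eq_zero_of_eq h2
  have e3 : c * a * c - (a * c - c * a) = 0 := sub_eq_zero_of_eq h2'
  have e4 : a * b - b * a - c = 0 := sub_eq_zero_of_eq h3
  have key : c ^ 3 =
      -((a ^ 3 - c * b * c) * a)
      + (a ^ 3 - c * b * c) * (a * c)
      + a * (a ^ 3 - c * b * c)
      - a * (a ^ 3 - c * b * c) * c
      - (c * b * c - (b * c - c * b)) * (a * c)
      - a * (c * b * c - (b * c - c * b)) * c
      + (c * a) * (c * b * c - (b * c - c * b))
      + (b ^ 3 - c * a * c) * b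
      - (b ^ 3 - c * a * c) * (b * c)
      - b * (b ^ 3 - c * a * c)
      + b * (b ^ 3 - c * a * c) * c
      + (c * a * c - (a * c - c * a)) * (b * c)
      + b * (c * a * c - (a * c - c * a)) * c
      - (c * b) * (c * a * c - (a * c - c * a))
      - (a * b - b * a - c) * (c * c)
      + 3 * (c * b * c * a * c + a * c * b * c - b * c * a * c - c * a * c * b * c) := by
    noncomm_ring
  rw [e0, e1, e2, e3, e4] at key
  simp only [zero_mul, mul_zero, neg_zero, add_zero, zero_add, sub_zero, zero_sub, neg_neg] at key
  rw [key, h3A, zero_mul]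
end

section
/- Let k be a field of characteristic 3 containing a square root i of -1, and A an associative unital k-algebra with elements x, y, z satisfying x^3 = 0, y^3 = 0, xy - yx = z, xz - zx = zyz, yz - zy = -zxz. Set a = x + iy, b = x - iy, c = iz. Then a^3 = cbc = [b,c], b^3 = cac = -[a,c], and [a,b] = c. -/
/-- Let `k` be a field of characteristic 3 containing a square root `i` of `-1`, and
`A` an associative unital `k`-algebra with elements `x, y, z` satisfying `x³ = 0`,
`y³ = 0`, `xy - yx = z`, `xz - zx = zyz`, `yz - zy = -zxz`.  Set `a = x + iy`,
`b = x - iy`, `c = iz`.  Then `a³ = cbc = [b,c]`, `b³ = cac = -[a,c]`, and `[a,b] = c`. -/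
theorem stmt8 (k : Type*) [Field k] [CharP k 3] (i : k) (hi : i ^ 2 = -1)
    (A : Type*) [Ring A] [Algebra k A] (x y z : A)
    (hx3 : x ^ 3 = 0) (hy3 : y ^ 3 = 0)
    (hz : x * y - y * x = z)
    (hxz : x * z - z * x = z * y * z)
    (hyz : y * z - z * y = -(z * x * z))
    (a b c : A)
    (ha : a = x + i • y) (hb : b = x - i • y) (hc : c = i • z) :
    (a ^ 3 = c * b * c ∧ c * b * c = b * c - c * b) ∧
    (b ^ 3 = c * a * c ∧ c * a * c = -(a * c - c * a)) ∧
    a * b - b * a = c := by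
  subst ha hb hc
  have h3k : (3 : k) = 0 := by exact_mod_cast CharP.cast_eq_zero k 3
  have hi' : i * i = -1 := by rw [← pow_two]; exact hi
  have h3 : ∀ t : A, t + t + t = 0 := by
    intro t
    have : ((3:k)) • t = 0 := by rw [h3k, zero_smul]
    calc t + t + t = (3:k) • t := by module
    _ = 0 := this
  have hS1 : x*x*y + x*y*x + y*x*x = z*y*z := by
    have key : x*x*y + x*y*x + y*x*x = (x*z - z*x) + (x*y*x + x*y*x + x*y*x) := by
      rw [← hz]; noncomm_ring
    rw [hxz, h3, add_zero] at key
    exact key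
  have hS2 : x*y*y + y*x*y + y*y*x = z*x*z := by
    have key : x*y*y + y*x*y + y*y*x = -(y*z - z*y) + (y*x*y + y*x*y + y*x*y) := by
      rw [← hz]; noncomm_ring
    rw [hyz, neg_neg, h3, add_zero] at key
    exact key
  have key1 : (x + i•y)^3 = i•(z*y*z) - z*x*z := by
    have e : (x + i•y)^3 = x^3 + i•(x*x*y + x*y*x + y*x*x) + (i*i)•(x*y*y + y*x*y + y*y*x) + (i*i*i)•(y^3) := by
      noncomm_ring
      module
    rw [e, hx3, hy3, hS1, hS2, hi', smul_zero, add_zero, zero_add, neg_one_smul]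
    abel
  have key4 : (x - i•y)^3 = -(i•(z*y*z)) - z*x*z := by
    have e : (x - i•y)^3 = x^3 - i•(x*x*y + x*y*x + y*x*x) + (i*i)•(x*y*y + y*x*y + y*y*x) - (i*i*i)•(y^3) := by
      noncomm_ring
      module
    rw [e, hx3, hy3, hS1, hS2, hi', smul_zero, sub_zero, zero_sub, neg_one_smul]
    abel
  have hconj : ∀ u : A, (i•z)*u*(i•z) = -(z*u*z) := by
    intro u
    rw [smul_mul_assoc, smul_mul_assoc, mul_smul_comm, smul_smul, hi', neg_one_smul]
  have key2 : (i•z)*(x - i•y)*(i•z) = i•(z*y*z) - z*x*z := by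
    rw [hconj]
    rw [mul_sub, sub_mul, mul_smul_comm, smul_mul_assoc]
    abel
  have key5 : (i•z)*(x + i•y)*(i•z) = -(i•(z*y*z)) - z*x*z := by
    rw [hconj]
    rw [mul_add, add_mul, mul_smul_comm, smul_mul_assoc]
    abel
  have key3 : (x - i•y)*(i•z) - (i•z)*(x - i•y) = i•(z*y*z) - z*x*z := by
    have e : (x - i•y)*(i•z) - (i•z)*(x - i•y) = i•(x*z - z*x) - (i*i)•(y*z - z*y) := by
      simp only [mul_sub, sub_mul, mul_smul_comm, smul_mul_assoc, smul_sub, smul_smul]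
      module
    rw [e, hi', neg_one_smul, hxz, hyz]
    abel
  have key6 : -((x + i•y)*(i•z) - (i•z)*(x + i•y)) = -(i•(z*y*z)) - z*x*z := by
    have e : (x + i•y)*(i•z) - (i•z)*(x + i•y) = i•(x*z - z*x) + (i*i)•(y*z - z*y) := by
      simp only [mul_add, add_mul, mul_smul_comm, smul_mul_assoc, smul_sub, smul_smul]
      module
    rw [e, hi', neg_one_smul, hxz, hyz]
    abel
  have key7 : (x + i•y)*(x - i•y) - (x - i•y)*(x + i•y) = i•z := by
    have h2 : (-2 : k) * i = i := by
      have : (-2 : k) = 1 := by linear_combination -h3k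
      rw [this, one_mul]
    have e : (x + i•y)*(x - i•y) - (x - i•y)*(x + i•y) = ((-2 : k) * i)•(x*y - y*x) := by
      simp only [mul_add, add_mul, mul_sub, sub_mul, mul_smul_comm, smul_mul_assoc, smul_sub,
        smul_add, smul_smul]
      module
    rw [e, h2, hz]
  exact ⟨⟨key1.trans key2.symm, key2.trans key3.symm⟩,
    ⟨key4.trans key5.symm, key5.trans key6.symm⟩, key7⟩
end

section
/- Let P be the extraspecial 3-group of order 27 and exponent 3 with generators g, h and commutator c = [g,h], and let k be a field of characteristic 3. Then the elements x̃ = g^{-1} - g and ỹ = h^{-1} - h of kP, with z̃ = x̃ỹ - ỹx̃, satisfy x̃^3 = 0, ỹ^3 = 0, x̃z̃ - z̃x̃ = z̃ỹz̃, and ỹz̃ - z̃ỹ = -z̃x̃z̃. -/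
/-!
With `a, b, c` the images of `g, h, c`, we have `x = a² - a = a (a - 1)` and
`(a - 1)³ = a³ - 1 = 0` in characteristic 3, so `x³ = 0`, and likewise `y³ = 0`.
The symmetry `(a, b, c) ↦ (b, a, c²)` preserves the defining relations and sends `z` to `-z`,
so it turns the first Lie relation into the second. The first one is a normal-form
computation: `c` is central and `b a = c² a b`, so every word reduces to some `aⁱ bʲ cᵏ`, and
all coefficients of `x z - z x - z y z` are then divisible by 3 (both sides equal
`(1 + c + c²)(1 + x²) y`).
-/

open scoped commutatorElement

theorem CharP.zsmul_eq_zero_of_dvd {R : Type*} [Ring R] (p : ℕ) [CharP R p] {n : ℤ}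
    (hn : (p : ℤ) ∣ n) (x : R) : n • x = 0 := by
  rw [zsmul_eq_mul, (CharP.intCast_eq_zero_iff R p n).2 hn, zero_mul]

theorem mul_mul_mul_eq_of_pow_three_eq_one {M : Type*} [Monoid M] {a : M} (ha : a ^ 3 = 1)
    (t : M) : a * (a * (a * t)) = t := by
  rw [← mul_assoc, ← mul_assoc, ← pow_three', ha, one_mul]

theorem sq_sub_self_pow_char_eq_zero {R : Type*} [Ring R] (p : ℕ) [Fact p.Prime] [CharP R p]
    {a : R} (ha : a ^ p = 1) : (a ^ 2 - a) ^ p = 0 := by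
  have hsub : (a - 1) ^ p = 0 := by
    rw [sub_pow_char_of_commute (p := p) (Commute.one_right a), ha, one_pow, sub_self]
  rw [sq, ← mul_sub_one, ((Commute.refl a).sub_right (Commute.one_right a)).mul_pow, hsub,
    mul_zero]

structure IsHeisenbergTriple {M : Type*} [Monoid M] (a b c : M) : Prop where
  pow_three_fst : a ^ 3 = 1
  pow_three_snd : b ^ 3 = 1
  pow_three_center : c ^ 3 = 1
  commute_fst : Commute c a
  commute_snd : Commute c b
  mul_eq : a * b = c * b * a

theorem isHeisenbergTriple_of_commutatorElement {G : Type*} [Group G] {g h c : G}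
    (hg : g ^ 3 = 1) (hh : h ^ 3 = 1) (hc : c ^ 3 = 1) (hcomm : ⁅g, h⁆ = c)
    (hcen : c ∈ Subgroup.center G) : IsHeisenbergTriple g h c where
  pow_three_fst := hg
  pow_three_snd := hh
  pow_three_center := hc
  commute_fst := (Subgroup.mem_center_iff.mp hcen g).symm
  commute_snd := (Subgroup.mem_center_iff.mp hcen h).symm
  mul_eq := by rw [← hcomm, commutatorElement_def]; group

namespace IsHeisenbergTriple

variable {M : Type*} [Monoid M] {a b c : M}

theorem map {N F : Type*} [Monoid N] [FunLike F M N] [MonoidHomClass F M N]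
    (H : IsHeisenbergTriple a b c) (f : F) : IsHeisenbergTriple (f a) (f b) (f c) where
  pow_three_fst := by rw [← map_pow, H.pow_three_fst, map_one]
  pow_three_snd := by rw [← map_pow, H.pow_three_snd, map_one]
  pow_three_center := by rw [← map_pow, H.pow_three_center, map_one]
  commute_fst := H.commute_fst.map f
  commute_snd := H.commute_snd.map f
  mul_eq := by rw [← map_mul, ← map_mul, ← map_mul, H.mul_eq]

theorem swap (H : IsHeisenbergTriple a b c) : IsHeisenbergTriple b a (c ^ 2) where
  pow_three_fst := H.pow_three_snd
  pow_three_snd := H.pow_three_fst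
  pow_three_center := by rw [pow_right_comm, H.pow_three_center, one_pow]
  commute_fst := H.commute_snd.pow_left 2
  commute_snd := H.commute_fst.pow_left 2
  mul_eq := calc
    b * a = c ^ 3 * (b * a) := by rw [H.pow_three_center, one_mul]
    _ = c ^ 2 * (a * b) := by rw [H.mul_eq, pow_succ]; simp only [mul_assoc]
    _ = c ^ 2 * a * b := (mul_assoc _ _ _).symm

section Ring

variable {R : Type*} [Ring R] [CharP R 3] {a b c x y z : R}

theorem lie_x_z_eq (H : IsHeisenbergTriple a b c) (hx : x = a ^ 2 - a) (hy : y = b ^ 2 - b)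
    (hz : z = x * y - y * x) : x * z - z * x = z * y * z := by
  have hba : ∀ t, b * (a * t) = a * (b * (c * (c * t))) := fun t => by
    rw [← mul_assoc, H.swap.mul_eq, sq]
    simp only [mul_assoc, H.commute_fst.left_comm, H.commute_snd.left_comm]
  -- The trailing `* 1` gives every monomial a tail `t`, so the rules above apply everywhere.
  rw [← sub_eq_zero, ← mul_one (x * z - z * x - z * y * z)]
  subst hz hx hy
  simp only [sq, mul_sub, sub_mul, mul_assoc, hba, H.commute_fst.left_comm,
    H.commute_snd.left_comm, mul_mul_mul_eq_of_pow_three_eq_one H.pow_three_fst,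
    mul_mul_mul_eq_of_pow_three_eq_one H.pow_three_snd,
    mul_mul_mul_eq_of_pow_three_eq_one H.pow_three_center]
  abel_nf
  simp (disch := decide) only [CharP.zsmul_eq_zero_of_dvd 3, add_zero]

theorem lie_y_z_eq (H : IsHeisenbergTriple a b c) (hx : x = a ^ 2 - a) (hy : y = b ^ 2 - b)
    (hz : z = x * y - y * x) : y * z - z * y = -(z * x * z) := by
  have h := H.swap.lie_x_z_eq hy hx (z := -z) (by rw [hz, neg_sub])
  calc y * z - z * y = -(y * -z - -z * y) := by noncomm_ring
    _ = -(z * x * z) := by rw [h]; noncomm_ring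

end Ring

end IsHeisenbergTriple

/-- Let `P` be the extraspecial 3-group of order 27 and exponent 3 with generators
`g, h` and central commutator `c = [g,h]`, and let `k` be a field of characteristic 3.
Then the elements `x̃ = g⁻¹ - g` and `ỹ = h⁻¹ - h` of `kP`, with `z̃ = x̃ỹ - ỹx̃`,
satisfy `x̃³ = 0`, `ỹ³ = 0`, `x̃z̃ - z̃x̃ = z̃ỹz̃`, and `ỹz̃ - z̃ỹ = -z̃x̃z̃`. -/
theorem stmt11 (k : Type*) [Field k] [CharP k 3]
    (P : Type*) [Group P] (g h c : P)
    (hg3 : g ^ 3 = 1) (hh3 : h ^ 3 = 1) (hc3 : c ^ 3 = 1)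
    (hcomm : ⁅g, h⁆ = c) (hcen : c ∈ Subgroup.center P)
    (x y z : MonoidAlgebra k P)
    (hx : x = MonoidAlgebra.of k P g⁻¹ - MonoidAlgebra.of k P g)
    (hy : y = MonoidAlgebra.of k P h⁻¹ - MonoidAlgebra.of k P h)
    (hz : z = x * y - y * x) :
    x ^ 3 = 0 ∧ y ^ 3 = 0 ∧
      x * z - z * x = z * y * z ∧ y * z - z * y = -(z * x * z) := by
  have H := (isHeisenbergTriple_of_commutatorElement hg3 hh3 hc3 hcomm hcen).map
    (MonoidAlgebra.of k P)
  have of_inv : ∀ p : P, p ^ 3 = 1 → MonoidAlgebra.of k P p⁻¹ = MonoidAlgebra.of k P p ^ 2 :=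
    fun p hp => by rw [← map_pow, inv_eq_of_mul_eq_one_right (by rw [← pow_succ', hp])]
  have : CharP (MonoidAlgebra k P) 3 :=
    charP_of_injective_algebraMap (algebraMap k _).injective 3
  rw [of_inv g hg3] at hx
  rw [of_inv h hh3] at hy
  exact ⟨hx ▸ sq_sub_self_pow_char_eq_zero 3 H.pow_three_fst,
    hy ▸ sq_sub_self_pow_char_eq_zero 3 H.pow_three_snd,
    H.lie_x_z_eq hx hy hz, H.lie_y_z_eq hx hy hz⟩
end

section
/- Let k be a field of characteristic p, G a finite group with a normal Sylow p-subgroup P such that G = P ⋊ H with H a p'-group. Then the Jacobson radical satisfies J(kG) = J(kP)·kG = kG·J(kP). -/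
/-!
If `P` is a normal `p`-subgroup of `G`, then `P` acts trivially on every simple `kG`-module: its
`P`-fixed vectors form a submodule by normality, and a nonzero one because a `p`-group acting on a
finite nonzero `𝔽_p`-space fixes a nonzero vector (orbit counting). Hence `kP` acts on simple
modules through the augmentation, which kills `J(kP)`, so `J(kP)` and both one-sided ideals it
generates lie in `J(kG)`. Conversely `J(kG)` maps into `J(k[G/P]) = 0`, by Maschke since
`|G/P| = |H|` is prime to `p`, and the kernel of `kG → k[G/P]` is spanned by differences `g - g'`
of elements of one coset, which are `(g g'⁻¹ - 1) g' = g' (g'⁻¹ g - 1)` with `n - 1 ∈ J(kP)`.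
-/

universe u

theorem Ring.mem_jacobson_of_forall_smul_eq_zero {R : Type u} [Ring R] {a : R}
    (h : ∀ (S : Type u) [AddCommGroup S] [Module R S] [IsSimpleModule R S] (s : S), a • s = 0) :
    a ∈ Ring.jacobson R := by
  rw [Ring.jacobson_eq_sInf_isMaximal, Submodule.mem_sInf]
  intro M hM
  have : IsSimpleModule R (R ⧸ M) := isSimpleModule_iff_isCoatom.mpr (Ideal.isMaximal_def.mp hM)
  simpa [← Submodule.Quotient.mk_smul, Submodule.Quotient.mk_eq_zero] using
    h (R ⧸ M) (Submodule.Quotient.mk 1)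

theorem Ring.jacobson_le_ker {R S : Type*} [Ring R] [Ring S] [IsSemisimpleRing S] (f : R →+* S)
    (hf : Function.Surjective f) : Ring.jacobson R ≤ RingHom.ker f :=
  haveI : RingHomSurjective f := ⟨hf⟩
  IsSemisimpleModule.jacobson_le_ker R S R S f.toSemilinearMap

theorem IsPGroup.exists_ne_zero_forall_smul_eq {p : ℕ} [Fact p.Prime] {P V : Type*} [Group P]
    [Finite P] (hP : IsPGroup p P) [AddCommGroup V] [Module (ZMod p) V] [DistribMulAction P V]
    {v : V} (hv : v ≠ 0) : ∃ w : V, w ≠ 0 ∧ ∀ g : P, g • w = w := by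
  let W := Submodule.span (ZMod p) (Set.range fun g : P ↦ g • v)
  have hWstable : ∀ (g : P) {x : V}, x ∈ W → g • x ∈ W := by
    intro g x hx
    induction hx using Submodule.span_induction with
    | mem x hx =>
      obtain ⟨h, rfl⟩ := hx
      exact Submodule.subset_span ⟨g * h, mul_smul g h v⟩
    | zero => rw [smul_zero]; exact W.zero_mem
    | add x y _ _ hx hy => rw [smul_add]; exact W.add_mem hx hy
    | smul c x _ hx =>
      rw [← DistribMulAction.toAddMonoidHom_apply, ZMod.map_smul]
      exact W.smul_mem c hx
  let X : SubMulAction P V := ⟨W, hWstable⟩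
  have : Module.Finite (ZMod p) W := Module.Finite.span_of_finite _ (Set.finite_range _)
  have : Finite X := Module.finite_of_finite (ZMod p) (M := W)
  have hvW : v ∈ W := Submodule.subset_span ⟨1, one_smul P v⟩
  have hcard : p ∣ Nat.card X := by
    have hpv : addOrderOf (⟨v, hvW⟩ : W) = p := by
      refine addOrderOf_eq_prime ?_ (by simpa using hv)
      rw [← Nat.cast_smul_eq_nsmul (ZMod p), ZMod.natCast_self, zero_smul]
    exact hpv ▸ addOrderOf_dvd_natCard _
  obtain ⟨w, hw, hne⟩ := hP.exists_fixed_point_of_prime_dvd_card_of_fixed_point X hcard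
    (a := ⟨0, W.zero_mem⟩) fun g ↦ Subtype.ext (smul_zero g)
  exact ⟨w, fun h ↦ hne (Subtype.ext h.symm), fun g ↦ congrArg Subtype.val (hw g)⟩

namespace MonoidAlgebra

theorem mapDomain_surjective {R M N : Type*} [Semiring R] {f : M → N}
    (hf : Function.Surjective f) : Function.Surjective (mapDomain (R := R) f) := fun y ↦
  let ⟨x, hx⟩ := Finsupp.mapDomain_surjective hf y.coeff
  ⟨ofCoeff x, congrArg ofCoeff hx⟩

theorem mem_of_mapDomain_quotientMk_eq_zero {k G : Type*} [Ring k] [Group G]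
    {P : Subgroup G} {A : AddSubgroup k[G]}
    (hA : ∀ (g g' : G) (c : k), g'⁻¹ * g ∈ P → single g c - single g' c ∈ A) {x : k[G]}
    (hx : mapDomain ((↑) : G → G ⧸ P) x = 0) : x ∈ A := by
  have hrepr (y : k[G]) : y - mapDomain Quotient.out (mapDomain ((↑) : G → G ⧸ P) y) ∈ A := by
    induction y using induction_linear with
    | zero => simp
    | add y y' hy hy' =>
      rw [mapDomain_add, mapDomain_add, add_sub_add_comm]
      exact A.add_mem hy hy'
    | single g c =>
      rw [mapDomain_single, mapDomain_single]
      exact hA _ _ _ (QuotientGroup.eq.mp (QuotientGroup.out_eq' _))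
  simpa [hx] using hrepr x

section CommRing

variable {p : ℕ} [Fact p.Prime] {k G : Type*} [CommRing k] [CharP k p] [Group G]
  {P : Subgroup G}

theorem single_smul_eq_self_of_isSimpleModule [Finite P] (hPn : P.Normal) (hP : IsPGroup p P)
    {S : Type*} [AddCommGroup S] [Module k[G] S] [IsSimpleModule k[G] S] {g : G} (hg : g ∈ P)
    (s : S) : single g (1 : k) • s = s := by
  let F : Submodule k[G] S :=
    { carrier := {s | ∀ n ∈ P, single n (1 : k) • s = s}
      add_mem' := fun hs ht n hn ↦ by rw [smul_add, hs n hn, ht n hn]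
      zero_mem' := fun n _ ↦ smul_zero _
      smul_mem' := fun r s hs n hn ↦ by
        induction r using induction_linear with
        | zero => rw [zero_smul, smul_zero]
        | add r r' hr hr' => rw [add_smul, smul_add, hr, hr']
        | single h c =>
          have hconj : h⁻¹ * n * h ∈ P := by simpa using hPn.conj_mem n hn h⁻¹
          rw [← mul_smul, single_mul_single, one_mul,
            show n * h = h * (h⁻¹ * n * h) by group, ← mul_one c, ← single_mul_single, mul_smul,
            hs _ hconj, mul_one] }
  have hpS (s : S) : p • s = 0 := by
    rw [← Nat.cast_smul_eq_nsmul k[G], ← map_natCast (algebraMap k k[G]), CharP.cast_eq_zero,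
      map_zero, zero_smul]
  let := AddCommGroup.zmodModule hpS
  let : DistribMulAction P S := DistribMulAction.compHom S ((of k G).comp P.subtype)
  have := IsSimpleModule.nontrivial k[G] S
  obtain ⟨v, hv⟩ := exists_ne (0 : S)
  obtain ⟨w, hw0, hw⟩ := hP.exists_ne_zero_forall_smul_eq hv
  have hwF : w ∈ F := fun n hn ↦ hw ⟨n, hn⟩
  have hF : F = ⊤ := (eq_bot_or_eq_top F).resolve_left fun h ↦ hw0 <|
    (Submodule.mem_bot k[G]).mp (h ▸ hwF)
  exact (hF ▸ Submodule.mem_top : s ∈ F) g hg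

theorem single_sub_one_mem_jacobson [Finite P] (hPn : P.Normal) (hP : IsPGroup p P) {g : G}
    (hg : g ∈ P) : single g (1 : k) - 1 ∈ Ring.jacobson k[G] :=
  Ring.mem_jacobson_of_forall_smul_eq_zero fun _ _ _ _ s ↦ by
    rw [sub_smul, one_smul, single_smul_eq_self_of_isSimpleModule hPn hP hg, sub_self]

theorem mapDomain_subtype_smul_eq_of_isSimpleModule [Finite P] (hPn : P.Normal)
    (hP : IsPGroup p P) {S : Type*} [AddCommGroup S] [Module k[G] S] [IsSimpleModule k[G] S]
    (a : k[P]) (s : S) :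
    mapDomainAlgHom k k P.subtype a • s = algebraMap k k[G] (lift k k P 1 a) • s := by
  induction a using induction_linear with
  | zero => simp
  | add a a' ha ha' => rw [map_add, map_add, map_add, add_smul, add_smul, ha, ha']
  | single g c =>
    have hsingle : single (g : G) c = algebraMap k k[G] c * single (g : G) 1 := by simp
    rw [mapDomainAlgHom_apply, mapDomain_single, Subgroup.coe_subtype, hsingle, mul_smul,
      single_smul_eq_self_of_isSimpleModule hPn hP g.2, lift_single]
    simp

theorem _root_.IsPGroup.single_sub_one_mem_jacobson {Q : Type*} [Group Q] [Finite Q]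
    (hQ : IsPGroup p Q) (g : Q) : single g (1 : k) - 1 ∈ Ring.jacobson k[Q] :=
  MonoidAlgebra.single_sub_one_mem_jacobson inferInstance (hQ.to_subgroup ⊤) (Subgroup.mem_top g)

end CommRing

section Field

variable {p : ℕ} [Fact p.Prime] {k G : Type*} [Field k] [CharP k p] [Group G]
  {P : Subgroup G}

theorem mapDomainAlgHom_subtype_mem_jacobson [Finite P] (hPn : P.Normal) (hP : IsPGroup p P)
    {a : k[P]} (ha : a ∈ Ring.jacobson k[P]) :
    mapDomainAlgHom k k P.subtype a ∈ Ring.jacobson k[G] := by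
  have hε : lift k k P 1 a = 0 :=
    Ring.jacobson_le_ker (lift k k P 1 : k[P] →+* k) (fun c ↦ ⟨single 1 c, by simp⟩) ha
  exact Ring.mem_jacobson_of_forall_smul_eq_zero fun _ _ _ _ s ↦ by
    rw [mapDomain_subtype_smul_eq_of_isSimpleModule hPn hP, hε, map_zero, zero_smul]

theorem mapDomain_quotientMk_eq_zero_of_mem_jacobson (hPn : P.Normal)
    (hindex : (P.index : k) ≠ 0) {x : k[G]} (hx : x ∈ Ring.jacobson k[G]) :
    mapDomain ((↑) : G → G ⧸ P) x = 0 := by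
  have : Finite (G ⧸ P) := Subgroup.index_ne_zero_iff_finite.mp fun h ↦ hindex (by simp [h])
  have : NeZero (Nat.card (G ⧸ P) : k) := ⟨hindex⟩
  exact Ring.jacobson_le_ker (mapDomainRingHom k (QuotientGroup.mk' P))
    (mapDomain_surjective (QuotientGroup.mk'_surjective P)) hx

theorem coe_jacobson_eq_closure_jacobson_mul [Finite P] (hPn : P.Normal) (hP : IsPGroup p P)
    (hindex : (P.index : k) ≠ 0) :
    (Ring.jacobson k[G] : Set k[G]) = AddSubgroup.closure
      {u | ∃ a ∈ Ring.jacobson k[P], ∃ x : k[G], u = mapDomainAlgHom k k P.subtype a * x} := by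
  refine subset_antisymm (fun x hx ↦ ?_) ?_
  · refine mem_of_mapDomain_quotientMk_eq_zero (fun g g' c hg ↦ ?_)
      (mapDomain_quotientMk_eq_zero_of_mem_jacobson hPn hindex hx)
    refine AddSubgroup.subset_closure ⟨single ⟨g * g'⁻¹, hPn.mem_comm_iff.mp hg⟩ 1 - 1,
      hP.single_sub_one_mem_jacobson _, single g' c, ?_⟩
    rw [map_sub, map_one]
    simp [sub_mul, single_mul_single]
  · refine AddSubgroup.closure_le (Ring.jacobson k[G]).toAddSubgroup |>.mpr ?_
    rintro _ ⟨a, ha, x, rfl⟩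
    exact Ideal.mul_mem_right x _ (mapDomainAlgHom_subtype_mem_jacobson hPn hP ha)

theorem coe_jacobson_eq_closure_mul_jacobson [Finite P] (hPn : P.Normal) (hP : IsPGroup p P)
    (hindex : (P.index : k) ≠ 0) :
    (Ring.jacobson k[G] : Set k[G]) = AddSubgroup.closure
      {u | ∃ a ∈ Ring.jacobson k[P], ∃ x : k[G], u = x * mapDomainAlgHom k k P.subtype a} := by
  refine subset_antisymm (fun x hx ↦ ?_) ?_
  · refine mem_of_mapDomain_quotientMk_eq_zero (fun g g' c hg ↦ ?_)
      (mapDomain_quotientMk_eq_zero_of_mem_jacobson hPn hindex hx)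
    refine AddSubgroup.subset_closure ⟨single ⟨g'⁻¹ * g, hg⟩ 1 - 1,
      hP.single_sub_one_mem_jacobson _, single g' c, ?_⟩
    rw [map_sub, map_one]
    simp [mul_sub, single_mul_single]
  · refine AddSubgroup.closure_le (Ring.jacobson k[G]).toAddSubgroup |>.mpr ?_
    rintro _ ⟨a, ha, x, rfl⟩
    exact Ideal.mul_mem_left _ x (mapDomainAlgHom_subtype_mem_jacobson hPn hP ha)

end Field

end MonoidAlgebra

/-- Let `k` be a field of characteristic `p` and `G` a finite group with a normal Sylow
`p`-subgroup `P` such that `G = P ⋊ H` with `H` a `p'`-group.  Then the Jacobson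
radical satisfies `J(kG) = J(kP)·kG = kG·J(kP)` (where `J(kP)` is viewed inside `kG`
via the inclusion `P ≤ G`). -/
theorem stmt14 (p : ℕ) (hp : p.Prime)
    (k : Type*) [Field k] [CharP k p]
    (G : Type*) [Group G] [Fintype G]
    (P H : Subgroup G) (hPnormal : P.Normal) (hPp : IsPGroup p P)
    (hcompl : P.IsComplement' H) (hH : ¬ p ∣ Nat.card H)
    (ι : MonoidAlgebra k P →ₐ[k] MonoidAlgebra k G)
    (hι : ι = MonoidAlgebra.mapDomainAlgHom k k P.subtype) :
    (((⊥ : Ideal (MonoidAlgebra k G)).jacobson : Set (MonoidAlgebra k G)) =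
      ↑(AddSubgroup.closure
        {u | ∃ a ∈ (⊥ : Ideal (MonoidAlgebra k P)).jacobson,
          ∃ x : MonoidAlgebra k G, u = ι a * x})) ∧
    (((⊥ : Ideal (MonoidAlgebra k G)).jacobson : Set (MonoidAlgebra k G)) =
      ↑(AddSubgroup.closure
        {u | ∃ a ∈ (⊥ : Ideal (MonoidAlgebra k P)).jacobson,
          ∃ x : MonoidAlgebra k G, u = x * ι a})) := by
  subst hι
  have : Fact p.Prime := ⟨hp⟩
  have hindex : (P.index : k) ≠ 0 := by
    rwa [hcompl.symm.index_eq_card, Ne, CharP.cast_eq_zero_iff k p]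
  rw [Ideal.jacobson_bot, Ideal.jacobson_bot]
  exact ⟨MonoidAlgebra.coe_jacobson_eq_closure_jacobson_mul hPnormal hPp hindex,
    MonoidAlgebra.coe_jacobson_eq_closure_mul_jacobson hPnormal hPp hindex⟩
end

section
/- Let k be a field of characteristic 2 containing F4 with primitive cube root of unity ω, and let Q = ⟨g, h | g^2 = h^2 = [g,h] = c, c^2 = 1⟩ be the quaternion group of order 8. In kQ set x = ω̄ g + ω h + gh and y = ω g + ω̄ h + gh (where ω̄ = ω^2). Then x^2 = yxy, y^2 = xyx, x^4 = 0, and [x,y] = 1 + c + x^3 (equivalently xy - yx + x^3 = 1 + c). -/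
open scoped commutatorElement

/-- Let `k` be a field of characteristic 2 containing `F₄` with `ω² + ω + 1 = 0`, and
let `Q` be the quaternion group of order 8, presented by `g² = h² = [g,h] = c`,
`c² = 1` with `c` central.  In `kQ` set `x = ωg + ω̄h + gh` and `y = ω̄g + ωh + gh`
(where `ω̄ = ω²`).  Then `x² = yxy`, `y² = xyx`, `x⁴ = 0`, and
`xy + yx + x³ = 1 + c` (i.e. `[x,y] = 1 + c + x³` in characteristic 2). -/
theorem stmt16 (k : Type*) [Field k] [CharP k 2]
    (ω : k) (hω : ω ^ 2 + ω + 1 = 0)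
    (Q : Type*) [Group Q] (g h c : Q)
    (hg2 : g ^ 2 = c) (hh2 : h ^ 2 = c) (hcomm : ⁅g, h⁆ = c)
    (hc2 : c ^ 2 = 1) (hcen : c ∈ Subgroup.center Q)
    (x y : MonoidAlgebra k Q)
    (hx : x = ω • MonoidAlgebra.of k Q g + ω ^ 2 • MonoidAlgebra.of k Q h
      + MonoidAlgebra.of k Q (g * h))
    (hy : y = ω ^ 2 • MonoidAlgebra.of k Q g + ω • MonoidAlgebra.of k Q h
      + MonoidAlgebra.of k Q (g * h)) :
    x ^ 2 = y * x * y ∧ y ^ 2 = x * y * x ∧ x ^ 4 = 0 ∧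
      x * y + y * x + x ^ 3 = 1 + MonoidAlgebra.of k Q c := by
  have hz : ∀ q : Q, q * c = c * q := Subgroup.mem_center_iff.mp hcen
  have h2 : (2:k) = 0 := by
    have := CharP.cast_eq_zero k 2; exact_mod_cast this
  have hgg : g * g = c := by rw [← pow_two]; exact hg2
  have hhh : h * h = c := by rw [← pow_two]; exact hh2
  have hcc : c * c = 1 := by rw [← pow_two]; exact hc2
  have hgc : g * c = c * g := hz g
  have hhc : h * c = c * h := hz h
  have hhg : h * g = c * (g * h) := by
    have h1 : g * h = c * (h * g) := by rw [← hcomm]; group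
    rw [h1, ← mul_assoc, hcc, one_mul]
  have hgg' : ∀ q : Q, g * (g * q) = c * q := fun q => by rw [← mul_assoc, hgg]
  have hhh' : ∀ q : Q, h * (h * q) = c * q := fun q => by rw [← mul_assoc, hhh]
  have hcc' : ∀ q : Q, c * (c * q) = q := fun q => by rw [← mul_assoc, hcc, one_mul]
  have hgc' : ∀ q : Q, g * (c * q) = c * (g * q) := fun q => by rw [← mul_assoc, hgc, mul_assoc]
  have hhc' : ∀ q : Q, h * (c * q) = c * (h * q) := fun q => by rw [← mul_assoc, hhc, mul_assoc]
  have hhg' : ∀ q : Q, h * (g * q) = c * (g * (h * q)) := fun q => by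
    rw [← mul_assoc, hhg, mul_assoc, mul_assoc]
  have hof : ∀ (q : Q) (a : k), (MonoidAlgebra.single q a : MonoidAlgebra k Q)
      = a • MonoidAlgebra.of k Q q := by
    intro q a; simp [MonoidAlgebra.of_apply, MonoidAlgebra.smul_single']
  have hw2e : ω ^ 2 = ω + 1 := by linear_combination hω - (ω + 1) * h2
  have hw3 : ω ^ 3 = 1 := by linear_combination (ω + 1) * hω - (ω ^ 2 + ω + 1) * h2
  have hw4 : ω ^ 4 = ω := by linear_combination ω * hw3
  have hw5 : ω ^ 5 = ω + 1 := by linear_combination ω ^ 2 * hw3 + hw2e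
  have hw6 : ω ^ 6 = 1 := by linear_combination (ω ^ 3 + 1) * hw3
  have hw7 : ω ^ 7 = ω := by linear_combination ω ^ 4 * hw3 + hw4
  have hw8 : ω ^ 8 = ω + 1 := by linear_combination ω ^ 5 * hw3 + hw5
  have h3 : (3:k) = 1 := by linear_combination h2
  have h4 : (4:k) = 0 := by linear_combination 2 * h2
  have h5 : (5:k) = 1 := by linear_combination 2 * h2
  have h6 : (6:k) = 0 := by linear_combination 3 * h2
  have h7 : (7:k) = 1 := by linear_combination 3 * h2
  have h8 : (8:k) = 0 := by linear_combination 4 * h2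
  have h9 : (9:k) = 1 := by linear_combination 4 * h2
  have h10 : (10:k) = 0 := by linear_combination 5 * h2
  have h11 : (11:k) = 1 := by linear_combination 5 * h2
  have h12 : (12:k) = 0 := by linear_combination 6 * h2
  subst hx hy
  refine ⟨?_, ?_, ?_, ?_⟩ <;>
  · simp only [pow_succ, pow_zero, pow_one, one_mul, MonoidAlgebra.one_def,
      MonoidAlgebra.of_apply, MonoidAlgebra.smul_single', mul_one, add_mul, mul_add,
      MonoidAlgebra.single_mul_single,
      mul_assoc, hgg, hhh, hcc, hgc, hhc, hhg, hgg', hhh', hcc', hgc', hhc', hhg']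
    simp only [hof]
    match_scalars
    all_goals
      try ring_nf
      try simp only [hw8, hw7, hw6, hw5, hw4, hw3, hw2e]
      try ring_nf
      try simp only [h2, h3, h4, h5, h6, h7, h8, h9, h10, h11, h12, mul_one, one_mul,
        mul_zero, zero_mul, add_zero, zero_add]
      try ring1
end
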